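/- Let z = x+iy, w = u+iv be complex numbers and let h_k be the L²-normalized Hermite functions on ℝ. Define π(z,w)h_k(ξ) = e^{i(zξ + zw/2)} h_k(ξ + w) (where h_k is entirely extended). Then ∫_ℝ |π(z,w)h_k(ξ)|² dξ = e^{uy - vx} · L_k^0(-2(y²+v²)) e^{y²+v²}. -/

import Mathlib

open MeasureTheory Complex Real Filter

noncomputable section

/-- Physicists' Hermite polynomials as entire functions. -/
def hermitePoly : ℕ → ℂ → ℂ
  | 0, _ => 1
  | 1, z => 2 * z
  | (k+2), z => 2 * z * hermitePoly (k+1) z - 2 * (k+1 : ℂ) * hermitePoly k z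

/-- Entire extension of the L²-normalized Hermite function hₖ. -/
def hermiteFn (k : ℕ) (z : ℂ) : ℂ :=
  ((Real.sqrt (2 ^ k * k.factorial * Real.sqrt π))⁻¹ : ℝ) *
    hermitePoly k z * Complex.exp (-z ^ 2 / 2)

/-- Laguerre polynomial of type `α` at a complex argument. -/
def laguerre (α : ℝ) (k : ℕ) (z : ℂ) : ℂ :=
  ∑ j ∈ Finset.range (k + 1),
    ((Real.Gamma (k + α + 1) / (Real.Gamma (j + α + 1) * (k - j).factorial) : ℝ) : ℂ) *
      (-z) ^ j / (j.factorial : ℂ)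

/-- The (complexified) projective Heisenberg representation in one dimension. -/
def pi1 (z w : ℂ) (F : ℂ → ℂ) (ξ : ℂ) : ℂ :=
  Complex.exp (Complex.I * (z * ξ + z * w / 2)) * F (ξ + w)

/-- complex dot product. -/
def cdot {n : ℕ} (z w : Fin n → ℂ) : ℂ := ∑ i, z i * w i

/-- n-dimensional Hermite function Φ_α, entirely extended. -/
def HermitePhi {n : ℕ} (α : Fin n → ℕ) (z : Fin n → ℂ) : ℂ := ∏ i, hermiteFn (α i) (z i)

/-- The complexified projective representation π(z,w) in n dimensions. -/
def piN {n : ℕ} (z w : Fin n → ℂ) (F : (Fin n → ℂ) → ℂ) (ξ : Fin n → ℂ) : ℂ :=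
  Complex.exp (Complex.I * (cdot z ξ + cdot z w / 2)) * F (fun i => ξ i + w i)

/-- coercion of real vectors into ℂⁿ. -/
def cv {n : ℕ} (x : Fin n → ℝ) : Fin n → ℂ := fun i => (x i : ℂ)

/-- special Hermite functions Φ_{α,β}(z,w). -/
def specialHermite {n : ℕ} (α β : Fin n → ℕ) (z w : Fin n → ℂ) : ℂ :=
  (((2 * π) ^ (-(n : ℝ) / 2) : ℝ) : ℂ) *
    ∫ ξ : Fin n → ℝ, piN z w (HermitePhi α) (cv ξ) * (starRingEnd ℂ) (HermitePhi β (cv ξ))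

/-- multi-indices of length k. -/
def multiIndex (n k : ℕ) : Finset (Fin n → ℕ) :=
  (Fintype.piFinset fun _ => Finset.range (k + 1)).filter fun α => ∑ i, α i = k

/-- Hermite projection kernel Φ_k(z,w), entirely extended. -/
def PhiK (n k : ℕ) (z w : Fin n → ℂ) : ℂ :=
  ∑ α ∈ multiIndex n k, HermitePhi α z * HermitePhi α w

/-- Hermite coefficient (f, Φ_α). -/
def hermiteCoeff {n : ℕ} (f : (Fin n → ℝ) → ℂ) (α : Fin n → ℕ) : ℂ :=
  ∫ ξ : Fin n → ℝ, f ξ * (starRingEnd ℂ) (HermitePhi α (cv ξ))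

/-- ‖P_k f‖₂². -/
def projNormSq {n : ℕ} (f : (Fin n → ℝ) → ℂ) (k : ℕ) : ℝ :=
  ∑ α ∈ multiIndex n k, ‖hermiteCoeff f α‖ ^ 2

/-- The action of σ ∈ U(n) on ℂⁿ × ℂⁿ, σ·(z,w) = (a·z - b·w, a·w + b·z) for σ = a + ib. -/
def uAction {n : ℕ} (σ : Matrix.unitaryGroup (Fin n) ℂ) (zw : (Fin n → ℂ) × (Fin n → ℂ)) :
    (Fin n → ℂ) × (Fin n → ℂ) :=
  (fun i => ∑ j, ((((σ : Matrix (Fin n) (Fin n) ℂ) i j).re : ℂ) * zw.1 j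
      - (((σ : Matrix (Fin n) (Fin n) ℂ) i j).im : ℂ) * zw.2 j),
   fun i => ∑ j, ((((σ : Matrix (Fin n) (Fin n) ℂ) i j).re : ℂ) * zw.2 j
      + (((σ : Matrix (Fin n) (Fin n) ℂ) i j).im : ℂ) * zw.1 j))

/-- Laguerre function of type n-1, entirely extended: φ_k(z,w). -/
def laguerrePhi (n k : ℕ) (z w : Fin n → ℂ) : ℂ :=
  laguerre (n - 1 : ℝ) k ((cdot z z + cdot w w) / 2) * Complex.exp (-(cdot z z + cdot w w) / 4)

/-- the constant k!(n-1)!/(k+n-1)!. -/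
def lagRatio (n k : ℕ) : ℝ := (k.factorial * (n - 1).factorial : ℝ) / ((k + n - 1).factorial : ℝ)

/-! The squared modulus of `π(z,w)hₖ(ξ)` is `|e^{i(zξ+zw/2)}|² |hₖ(ξ+w)|²`, and
`|Hₖ(ζ)|² = Hₖ(ζ) Hₖ(ζ̄)` because `Hₖ` has real coefficients. Completing the square in the
exponent and translating `ξ`, the integral becomes
`e^{uy-vx+y²+v²} (2ᵏ k! √π)⁻¹ ∫ Hₖ(s+a) Hₖ(s+b) e^{-s²} ds` with `a = -y+iv`, `b = ā`.
Taylor's formula `Hₖ(s+a) = ∑ₘ C(k,m) (2a)ᵐ H_{k-m}(s)` together with the orthogonality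
`∫ Hⱼ Hₖ e^{-s²} = δⱼₖ 2ᵏ k! √π` evaluates this integral to
`2ᵏ k! √π ∑ₘ C(k,m) (2ab)ᵐ / m! = 2ᵏ k! √π Lₖ(-2ab)`, and `ab = y² + v²`. -/

open Polynomial ComplexConjugate

/-- `hermitePoly` as an element of `ℂ[X]`, to have derivatives, Taylor expansion and
polynomial evaluation at hand. -/
def physHermite : ℕ → ℂ[X]
  | 0 => 1
  | 1 => C 2 * X
  | k + 2 => C 2 * X * physHermite (k + 1) - C (2 * ((k : ℂ) + 1)) * physHermite k

theorem eval_physHermite : ∀ (k : ℕ) (z : ℂ), (physHermite k).eval z = hermitePoly k z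
  | 0, _ => by simp [physHermite, hermitePoly]
  | 1, _ => by simp [physHermite, hermitePoly]
  | k + 2, z => by
    simp [physHermite, hermitePoly, eval_physHermite (k + 1), eval_physHermite k]

theorem derivative_physHermite_succ :
    ∀ k : ℕ, derivative (physHermite (k + 1)) = C (2 * ((k : ℂ) + 1)) * physHermite k
  | 0 => by simp [physHermite]
  | 1 => by
    simp only [physHermite, derivative_sub, derivative_mul, derivative_C, derivative_X,
      derivative_one, map_mul, map_add, map_one, Nat.cast_one]
    ring
  | k + 2 => by
    rw [physHermite, derivative_sub, derivative_mul, derivative_C_mul, derivative_C_mul,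
      derivative_physHermite_succ (k + 1), derivative_physHermite_succ k, derivative_X,
      physHermite]
    push_cast
    simp only [map_add, map_mul, map_natCast, map_ofNat, map_one]
    ring

theorem physHermite_succ (k : ℕ) :
    physHermite (k + 1) = C 2 * X * physHermite k - derivative (physHermite k) := by
  cases k with
  | zero => simp [physHermite]
  | succ k => rw [derivative_physHermite_succ, physHermite]

theorem hasseDeriv_physHermite (k : ℕ) :
    ∀ m : ℕ, hasseDeriv m (physHermite k) = C (k.choose m * 2 ^ m : ℂ) * physHermite (k - m)
  | 0 => by simp
  | m + 1 => by
    have hcomp := congrArg (fun D => D (physHermite k)) (hasseDeriv_comp (R := ℂ) 1 m)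
    simp only [LinearMap.comp_apply, hasseDeriv_one, LinearMap.smul_apply,
      hasseDeriv_physHermite k m, derivative_C_mul, add_comm 1 m, Nat.choose_one_right] at hcomp
    refine smul_right_injective ℂ[X] (Nat.succ_ne_zero m) ?_
    simp only [← hcomp, nsmul_eq_mul, ← C_eq_natCast, ← mul_assoc, ← C_mul]
    rcases hkm : k - m with _ | j
    · rw [Nat.choose_eq_zero_of_lt (show k < m + 1 by omega)]
      simp [physHermite]
    · have hchoose : (k.choose (m + 1) : ℂ) * (m + 1) = k.choose m * (j + 1) := by
        exact_mod_cast hkm ▸ Nat.choose_succ_right_eq k m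
      rw [derivative_physHermite_succ, ← mul_assoc, ← C_mul, show k - (m + 1) = j by omega]
      congr 2
      push_cast
      linear_combination (-2 * 2 ^ m : ℂ) * hchoose

theorem hermitePoly_add (k : ℕ) (x a : ℂ) :
    hermitePoly k (x + a) =
      ∑ m ∈ Finset.range (k + 1), (k.choose m * (2 * a) ^ m : ℂ) * hermitePoly (k - m) x := by
  have hcoeff : ∀ m, (taylor x (physHermite k)).coeff m =
      k.choose m * 2 ^ m * hermitePoly (k - m) x := by
    intro m
    rw [taylor_coeff, hasseDeriv_physHermite, eval_C_mul, eval_physHermite]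
  have hdeg : (taylor x (physHermite k)).natDegree < k + 1 := by
    refine Nat.lt_succ_of_le (natDegree_le_iff_coeff_eq_zero.mpr fun m hm => ?_)
    rw [hcoeff, Nat.choose_eq_zero_of_lt hm]
    simp
  rw [← eval_physHermite, add_comm, ← taylor_eval, eval_eq_sum_range' hdeg]
  refine Finset.sum_congr rfl fun m _ => ?_
  rw [hcoeff]
  ring

theorem integrable_eval_mul_cexp_neg_sq (P : ℂ[X]) :
    Integrable fun x : ℝ => P.eval (x : ℂ) * cexp (-(x : ℂ) ^ 2) := by
  have hmon : ∀ n : ℕ, Integrable fun x : ℝ => (x : ℂ) ^ n * cexp (-(x : ℂ) ^ 2) := by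
    intro n
    have h := integrable_rpow_mul_exp_neg_mul_sq one_pos
      (lt_of_lt_of_le neg_one_lt_zero n.cast_nonneg)
    refine h.ofReal.congr (Eventually.of_forall fun x => ?_)
    simp [Complex.ofReal_exp]
  simp_rw [eval_eq_sum_range, Finset.sum_mul, mul_assoc]
  exact integrable_finsetSum _ fun i _ => (hmon i).const_mul _

def gaussianFunctional : ℂ[X] →ₗ[ℂ] ℂ where
  toFun P := ∫ x : ℝ, P.eval (x : ℂ) * cexp (-(x : ℂ) ^ 2)
  map_add' P Q := by
    simp only [eval_add, add_mul]
    exact integral_add (integrable_eval_mul_cexp_neg_sq P) (integrable_eval_mul_cexp_neg_sq Q)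
  map_smul' c P := by
    simp only [eval_smul, smul_eq_mul, mul_assoc, RingHom.id_apply]
    exact integral_const_mul c _

theorem gaussianFunctional_apply (P : ℂ[X]) :
    gaussianFunctional P = ∫ x : ℝ, P.eval (x : ℂ) * cexp (-(x : ℂ) ^ 2) := rfl

theorem gaussianFunctional_one : gaussianFunctional 1 = Real.sqrt π := by
  have h : ∫ x : ℝ, Real.exp (-x ^ 2) = Real.sqrt π := by simpa using integral_gaussian 1
  rw [← h, ← integral_complex_ofReal, gaussianFunctional_apply]
  simp only [eval_one, one_mul, Complex.ofReal_exp, Complex.ofReal_neg, Complex.ofReal_pow]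

theorem gaussianFunctional_derivative_sub (P : ℂ[X]) :
    gaussianFunctional (derivative P - C 2 * X * P) = 0 := by
  refine integral_eq_zero_of_hasDerivAt_of_integrable (fun x => ?_)
    (integrable_eval_mul_cexp_neg_sq _) (integrable_eval_mul_cexp_neg_sq P)
  have h : HasDerivAt (fun z : ℂ => P.eval z * cexp (-z ^ 2))
      ((derivative P - C 2 * X * P).eval (x : ℂ) * cexp (-(x : ℂ) ^ 2)) x := by
    have hgauss : HasDerivAt (fun z : ℂ => cexp (-z ^ 2))
        (cexp (-(x : ℂ) ^ 2) * -(2 * x)) x := by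
      simpa using ((hasDerivAt_pow 2 (x : ℂ)).neg).cexp
    refine ((P.hasDerivAt (x : ℂ)).fun_mul hgauss).congr_deriv ?_
    simp only [eval_sub, eval_mul, eval_C, eval_X]
    ring
  exact h.comp_ofReal

/-- Integration by parts, using `Hₖ₊₁ e^{-x²} = -(Hₖ e^{-x²})'`. -/
theorem gaussianFunctional_mul_physHermite_succ (P : ℂ[X]) (k : ℕ) :
    gaussianFunctional (P * physHermite (k + 1)) =
      gaussianFunctional (derivative P * physHermite k) := by
  have h := gaussianFunctional_derivative_sub (P * physHermite k)
  rw [show derivative (P * physHermite k) - C 2 * X * (P * physHermite k) =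
      derivative P * physHermite k - P * physHermite (k + 1) by
    rw [physHermite_succ, derivative_mul]; ring, map_sub, sub_eq_zero] at h
  exact h.symm

theorem gaussianFunctional_physHermite_mul_physHermite : ∀ j k : ℕ,
    gaussianFunctional (physHermite j * physHermite k) =
      if j = k then (2 ^ k * k.factorial * Real.sqrt π : ℂ) else 0
  | 0, 0 => by simp [physHermite, gaussianFunctional_one]
  | 0, k + 1 => by
    rw [gaussianFunctional_mul_physHermite_succ]
    simp [physHermite]
  | j + 1, 0 => by
    rw [mul_comm, gaussianFunctional_mul_physHermite_succ]
    simp [physHermite]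
  | j + 1, k + 1 => by
    rw [gaussianFunctional_mul_physHermite_succ, derivative_physHermite_succ, mul_assoc, C_mul',
      map_smul, gaussianFunctional_physHermite_mul_physHermite j k, smul_eq_mul]
    split_ifs with h₁ h₂ h₂
    · subst h₁
      push_cast [Nat.factorial_succ]
      ring
    · omega
    · omega
    · simp

theorem laguerre_zero (k : ℕ) (t : ℂ) :
    laguerre 0 k t =
      ∑ m ∈ Finset.range (k + 1), (k.choose m : ℂ) * (-t) ^ m / m.factorial := by
  refine Finset.sum_congr rfl fun m hm => ?_
  have hmk : m ≤ k := Nat.lt_succ_iff.mp (Finset.mem_range.mp hm)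
  simp only [add_zero, Real.Gamma_nat_eq_factorial, Nat.cast_choose ℂ hmk]
  push_cast
  ring

theorem integral_hermitePoly_add_mul_hermitePoly_add (k : ℕ) (a b : ℂ) :
    ∫ x : ℝ, hermitePoly k (x + a) * hermitePoly k (x + b) * cexp (-(x : ℂ) ^ 2) =
      2 ^ k * k.factorial * Real.sqrt π * laguerre 0 k (-2 * (a * b)) := by
  set c : ℂ → ℕ → ℂ := fun a m => k.choose m * (2 * a) ^ m
  have hexpand : ∀ x : ℝ,
      hermitePoly k (x + a) * hermitePoly k (x + b) * cexp (-(x : ℂ) ^ 2) =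
      (∑ m ∈ Finset.range (k + 1), ∑ n ∈ Finset.range (k + 1),
        (c a m * c b n) • (physHermite (k - m) * physHermite (k - n))).eval (x : ℂ) *
        cexp (-(x : ℂ) ^ 2) := by
    intro x
    simp only [hermitePoly_add, eval_finsetSum, eval_smul, eval_mul, eval_physHermite,
      Finset.sum_mul_sum, smul_eq_mul]
    congr 1
    refine Finset.sum_congr rfl fun m _ => Finset.sum_congr rfl fun n _ => ?_
    ring
  have hdiag : ∀ m ∈ Finset.range (k + 1), ∑ n ∈ Finset.range (k + 1),
      c a m * c b n * gaussianFunctional (physHermite (k - m) * physHermite (k - n)) =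
        c a m * c b m * (2 ^ (k - m) * (k - m).factorial * Real.sqrt π) := by
    intro m hm
    refine (Finset.sum_eq_single_of_mem m hm fun n hn hnm => ?_).trans ?_
    · have := Finset.mem_range.mp hm
      have := Finset.mem_range.mp hn
      rw [gaussianFunctional_physHermite_mul_physHermite, if_neg (by omega), mul_zero]
    · rw [gaussianFunctional_physHermite_mul_physHermite, if_pos rfl]
  simp_rw [integral_congr_ae (Eventually.of_forall hexpand), ← gaussianFunctional_apply, map_sum,
    map_smul, smul_eq_mul]
  rw [Finset.sum_congr rfl hdiag, laguerre_zero, Finset.mul_sum]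
  refine Finset.sum_congr rfl fun m hm => ?_
  have hmk : m ≤ k := Nat.lt_succ_iff.mp (Finset.mem_range.mp hm)
  have hfact : (k.choose m : ℂ) * m.factorial * (k - m).factorial = k.factorial := by
    exact_mod_cast Nat.choose_mul_factorial_mul_factorial hmk
  have hpow : (2 : ℂ) ^ (k - m) * 2 ^ m = 2 ^ k := by rw [← pow_add, Nat.sub_add_cancel hmk]
  have hm0 : (m.factorial : ℂ) ≠ 0 := Nat.cast_ne_zero.mpr m.factorial_ne_zero
  rw [← hfact, ← hpow]
  simp only [c]
  field_simp
  ring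

theorem hermitePoly_conj :
    ∀ (k : ℕ) (z : ℂ), hermitePoly k (conj z) = conj (hermitePoly k z)
  | 0, _ => by simp [hermitePoly]
  | 1, _ => by simp [hermitePoly, map_ofNat]
  | k + 2, z => by simp [hermitePoly, hermitePoly_conj (k + 1), hermitePoly_conj k, map_ofNat]

theorem ofReal_norm_sq_hermitePoly (k : ℕ) (z : ℂ) :
    ((‖hermitePoly k z‖ ^ 2 : ℝ) : ℂ) = hermitePoly k z * hermitePoly k (conj z) := by
  rw [hermitePoly_conj, Complex.mul_conj', Complex.ofReal_pow]

theorem ofReal_norm_sq_pi1_hermiteFn (x y u v ξ : ℝ) (k : ℕ) :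
    ((‖pi1 (x + y * I) (u + v * I) (hermiteFn k) (ξ : ℂ)‖ ^ 2 : ℝ) : ℂ) =
      ((Real.exp (u * y - v * x) * Real.exp (y ^ 2 + v ^ 2) /
          (2 ^ k * k.factorial * Real.sqrt π) : ℝ) : ℂ) *
        (hermitePoly k (((ξ + (u + y) : ℝ) : ℂ) + (-y + v * I)) *
          hermitePoly k (((ξ + (u + y) : ℝ) : ℂ) + (-y - v * I)) *
          cexp (-((ξ + (u + y) : ℝ) : ℂ) ^ 2)) := by
  have hphase : 2 * ((I * ((x + y * I) * ξ + (x + y * I) * (u + v * I) / 2)).re +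
      (-((ξ : ℂ) + (u + v * I)) ^ 2 / 2).re) =
        (u * y - v * x) + (y ^ 2 + v ^ 2) + -(ξ + (u + y)) ^ 2 := by
    simp only [mul_re, I_re, add_re, ofReal_re, mul_zero, ofReal_im, I_im, mul_one, sub_self,
      add_zero, add_im, mul_im, zero_add, sub_zero, div_ofNat_re, zero_mul, div_ofNat_im, one_mul,
      zero_sub, neg_add_rev, sq, neg_re, neg_sub]
    ring
  have hsq : ∀ a b c h : ℝ,
      (Real.exp a * (c * h * Real.exp b)) ^ 2 = c ^ 2 * h ^ 2 * Real.exp (2 * (a + b)) := by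
    intro a b c h
    rw [show 2 * (a + b) = a + a + (b + b) by ring, Real.exp_add, Real.exp_add, Real.exp_add]
    ring
  have hnorm : ‖pi1 (x + y * I) (u + v * I) (hermiteFn k) (ξ : ℂ)‖ ^ 2 =
      Real.exp (u * y - v * x) * Real.exp (y ^ 2 + v ^ 2) / (2 ^ k * k.factorial * Real.sqrt π) *
        (‖hermitePoly k ((ξ : ℂ) + (u + v * I))‖ ^ 2 * Real.exp (-(ξ + (u + y)) ^ 2)) := by
    unfold pi1 hermiteFn
    simp only [norm_mul, Complex.norm_exp, Complex.norm_real, Real.norm_eq_abs, abs_inv,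
      abs_of_nonneg (Real.sqrt_nonneg _)]
    rw [hsq, hphase, inv_pow, Real.sq_sqrt (by positivity), Real.exp_add, Real.exp_add]
    ring
  have hshift : (ξ : ℂ) + (u + v * I) = ((ξ + (u + y) : ℝ) : ℂ) + (-y + v * I) := by
    push_cast
    ring
  have hconj : conj ((ξ : ℂ) + (u + v * I)) = ((ξ + (u + y) : ℝ) : ℂ) + (-y - v * I) := by
    simp only [map_add, conj_ofReal, map_mul, conj_I, mul_neg, ofReal_add]
    ring
  rw [hnorm, Complex.ofReal_mul, Complex.ofReal_mul, ofReal_norm_sq_hermitePoly, hconj, hshift,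
    Complex.ofReal_exp]
  push_cast
  ring

/-- The L² norm of π(z,w)hₖ in terms of the Laguerre function at (2iy,2iv). -/
theorem norm_pi_hermite (x y u v : ℝ) (k : ℕ) :
    ((∫ ξ : ℝ, ‖pi1 ((x : ℂ) + (y : ℂ) * Complex.I) ((u : ℂ) + (v : ℂ) * Complex.I)
          (hermiteFn k) (ξ : ℂ)‖ ^ 2 : ℝ) : ℂ) =
      ((Real.exp (u * y - v * x) : ℝ) : ℂ) *
        laguerre 0 k (-2 * (((y : ℂ)) ^ 2 + ((v : ℂ)) ^ 2)) *
        ((Real.exp (y ^ 2 + v ^ 2) : ℝ) : ℂ) := by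
  have hfact : (k.factorial : ℂ) ≠ 0 := Nat.cast_ne_zero.mpr k.factorial_ne_zero
  have hsqrt : (Real.sqrt π : ℂ) ≠ 0 :=
    Complex.ofReal_ne_zero.mpr (Real.sqrt_pos.mpr pi_pos).ne'
  have hab : -2 * ((-y + v * I) * (-y - v * I)) = -2 * ((y : ℂ) ^ 2 + (v : ℂ) ^ 2) := by
    linear_combination (2 * (v : ℂ) ^ 2) * I_sq
  rw [← integral_complex_ofReal]
  simp_rw [ofReal_norm_sq_pi1_hermiteFn]
  rw [integral_const_mul, integral_add_right_eq_self (fun s : ℝ =>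
      hermitePoly k (s + (-y + v * I)) * hermitePoly k (s + (-y - v * I)) * cexp (-(s : ℂ) ^ 2))
      (u + y),
    integral_hermitePoly_add_mul_hermitePoly_add, hab]
  push_cast
  field_simp

end
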